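/- Let T be a trajectory in ℝ³ with n ≥ 1 edges, each edge axis-parallel (for each 1 ≤ i ≤ n, the points p_{i−1} and p_i differ in at most one coordinate), and such that every edge parallel to the z-axis has positive length. Fix a side length s > 0. Then h(T) = sup over j ∈ {0, …, n}, (x, y) ∈ ℝ², and b ∈ {(p_j).3 − s, (p_j).3} of w_T(x, y, b); that is, the maximum cube weight is achieved, in the supremum, by cubes one of whose two xy-parallel face planes passes through a vertex of T. -/

import Mathlib

open MeasureTheory Set
open scoped ENNReal

/-- `Cube s x y z` is the axis-parallel cube `[x, x+s] × [y, y+s] × [z, z+s]` in `ℝ³`. -/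
def Cube (s x y z : ℝ) : Set (ℝ × ℝ × ℝ) :=
  Icc x (x + s) ×ˢ Icc y (y + s) ×ˢ Icc z (z + s)

/-- The weight of `Cube s x y z` with respect to a trajectory `T` on `[t0, tn]`:
the Lebesgue measure of `{t ∈ [t0, tn] : T t ∈ Cube s x y z}`. -/
noncomputable def wgt3 (s t0 tn : ℝ) (T : ℝ → ℝ × ℝ × ℝ) (x y z : ℝ) : ℝ≥0∞ :=
  volume {τ ∈ Icc t0 tn | T τ ∈ Cube s x y z}

/-! Fix `x, y` and view the weight as a function of the height `z` of the cube. An edge lying in a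
horizontal plane spends in the cube either a fixed time (independent of `z`) or no time, according
to whether its height lies in `[z, z + s]`; a vertical edge from height `α` to `β` spends time
proportional to the length of `[[α, β]] ∩ [z, z + s]`. Between two consecutive points of the
breakpoint set `{(p j).3, (p j).3 - s}` each of these profiles lies below its chord, hence so does
their sum, and the weight at `z` is at most the weight at one of the two neighbouring
breakpoints. Beyond all breakpoints the cube misses the trajectory. -/

def BelowChord (f : ℝ → ℝ≥0∞) (u v : ℝ) : Prop :=
  ∀ z ∈ Ioo u v,
    f z ≤ ENNReal.ofReal ((v - z) / (v - u)) * f u + ENNReal.ofReal ((z - u) / (v - u)) * f v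

theorem ofReal_chord_weights_add {u v z : ℝ} (hz : z ∈ Ioo u v) :
    ENNReal.ofReal ((v - z) / (v - u)) + ENNReal.ofReal ((z - u) / (v - u)) = 1 := by
  have huv : 0 < v - u := by linarith [hz.1, hz.2]
  rw [← ENNReal.ofReal_add (div_nonneg (by linarith [hz.2]) huv.le)
    (div_nonneg (by linarith [hz.1]) huv.le), ← add_div, sub_add_sub_cancel, div_self huv.ne',
    ENNReal.ofReal_one]

namespace BelowChord

variable {f g : ℝ → ℝ≥0∞} {u v : ℝ}

theorem le_max (hf : BelowChord f u v) {z : ℝ} (hz : z ∈ Ioo u v) : f z ≤ max (f u) (f v) :=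
  calc f z ≤ _ := hf z hz
    _ ≤ ENNReal.ofReal ((v - z) / (v - u)) * max (f u) (f v) +
        ENNReal.ofReal ((z - u) / (v - u)) * max (f u) (f v) := by
      gcongr
      exacts [le_max_left _ _, le_max_right _ _]
    _ = max (f u) (f v) := by rw [← add_mul, ofReal_chord_weights_add hz, one_mul]

theorem congr (hf : BelowChord f u v) (hfg : EqOn f g (Icc u v)) : BelowChord g u v := by
  intro z hz
  have huv : u ≤ v := (hz.1.trans hz.2).le
  rw [← hfg (Ioo_subset_Icc_self hz), ← hfg (left_mem_Icc.2 huv), ← hfg (right_mem_Icc.2 huv)]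
  exact hf z hz

theorem const_mul (hf : BelowChord f u v) (c : ℝ≥0∞) : BelowChord (fun z => c * f z) u v :=
  fun z hz =>
    calc c * f z ≤ c * (ENNReal.ofReal ((v - z) / (v - u)) * f u +
          ENNReal.ofReal ((z - u) / (v - u)) * f v) := by gcongr; exact hf z hz
      _ = _ := by ring

theorem sum {ι : Type*} (s : Finset ι) {f : ι → ℝ → ℝ≥0∞} (hf : ∀ i ∈ s, BelowChord (f i) u v) :
    BelowChord (fun z => ∑ i ∈ s, f i z) u v := fun z hz =>
  calc ∑ i ∈ s, f i z ≤ ∑ i ∈ s, (ENNReal.ofReal ((v - z) / (v - u)) * f i u +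
        ENNReal.ofReal ((z - u) / (v - u)) * f i v) := Finset.sum_le_sum fun i hi => hf i hi z hz
    _ = _ := by rw [Finset.sum_add_distrib, Finset.mul_sum, Finset.mul_sum]

end BelowChord

theorem belowChord_ofReal_affine (A C u v : ℝ) :
    BelowChord (fun z => ENNReal.ofReal (A * z + C)) u v := by
  intro z hz
  have huv : 0 < v - u := by linarith [hz.1, hz.2]
  have hchord : A * z + C =
      (v - z) / (v - u) * (A * u + C) + (z - u) / (v - u) * (A * v + C) := by
    field_simp; ring
  dsimp only
  rw [hchord, ← ENNReal.ofReal_mul (div_nonneg (by linarith [hz.2]) huv.le),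
    ← ENNReal.ofReal_mul (div_nonneg (by linarith [hz.1]) huv.le)]
  exact ENNReal.ofReal_add_le

theorem belowChord_ofReal_min_sub_max {m M s u v : ℝ} (hm : m ∉ Ioo u v)
    (hM : M - s ∉ Ioo u v) :
    BelowChord (fun z => ENNReal.ofReal (min M (z + s) - max m z)) u v := by
  rw [mem_Ioo, not_and_or, not_lt, not_lt] at hm hM
  obtain ⟨A, C, hAC⟩ : ∃ A C : ℝ, EqOn (fun z => min M (z + s)) (fun z => A * z + C) (Icc u v) := by
    rcases hM with hM | hM
    · exact ⟨0, M, fun z hz => by simp only [min_eq_left (by linarith [hz.1] : M ≤ z + s)]; ring⟩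
    · exact ⟨1, s, fun z hz => by simp only [min_eq_right (by linarith [hz.2] : z + s ≤ M)]; ring⟩
  obtain ⟨A', C', hAC'⟩ : ∃ A C : ℝ, EqOn (fun z => max m z) (fun z => A * z + C) (Icc u v) := by
    rcases hm with hm | hm
    · exact ⟨1, 0, fun z hz => by simp only [max_eq_right (hm.trans hz.1)]; ring⟩
    · exact ⟨0, m, fun z hz => by simp only [max_eq_left (hz.2.trans hm)]; ring⟩
  refine (belowChord_ofReal_affine (A - A') (C - C') u v).congr fun z hz => ?_
  simp only [hAC hz, hAC' hz]
  ring_nf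

theorem volume_sep_Icc_affine_mem {a b α β : ℝ} (hab : a < b) (hαβ : α ≠ β) (S : Set ℝ) :
    volume {τ ∈ Icc a b | α + (τ - a) / (b - a) * (β - α) ∈ S} =
      ENNReal.ofReal ((b - a) / |β - α|) * volume (uIcc α β ∩ S) := by
  have hba : b - a ≠ 0 := sub_ne_zero.2 hab.ne'
  set c := (β - α) / (b - a) with hc
  have hc0 : c ≠ 0 := div_ne_zero (sub_ne_zero.2 hαβ.symm) hba
  have hpre : ∀ X : Set ℝ, (fun τ => c * τ) ⁻¹' ((fun w => w + (α - c * a)) ⁻¹' X) =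
      {τ | α + (τ - a) / (b - a) * (β - α) ∈ X} := by
    intro X
    ext τ
    simp only [mem_preimage, mem_ofPred_eq, hc]
    congr! 1
    field_simp
    ring
  have hIcc : {τ | α + (τ - a) / (b - a) * (β - α) ∈ uIcc α β} = Icc a b := by
    rw [← hpre, preimage_add_const_uIcc, preimage_const_mul_uIcc hc0, ← uIcc_of_le hab.le, hc]
    congr 1 <;> field_simp <;> ring
  have hset : {τ ∈ Icc a b | α + (τ - a) / (b - a) * (β - α) ∈ S} =
      (fun τ => c * τ) ⁻¹' ((fun w => w + (α - c * a)) ⁻¹' (uIcc α β ∩ S)) := by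
    rw [hpre, ← hIcc]
    rfl
  rw [hset, Real.volume_preimage_mul_left hc0, measure_preimage_add_right, hc, inv_div, abs_div,
    abs_of_pos (sub_pos.2 hab)]

theorem volume_uIcc_inter_Icc (α β z w : ℝ) :
    volume (uIcc α β ∩ Icc z w) = ENNReal.ofReal (min (max α β) w - max (min α β) z) := by
  rw [uIcc, Icc_inter_Icc, Real.volume_Icc]

section Edge

variable {a b : ℝ} {P Q : ℝ × ℝ × ℝ} {T : ℝ → ℝ × ℝ × ℝ} {s x y u v : ℝ}

theorem belowChord_volume_edge_of_z_eq
    (hT : EqOn T (fun τ => P + ((τ - a) / (b - a)) • (Q - P)) (Icc a b))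
    (hPQ : P.2.2 = Q.2.2) (hP : P.2.2 ∉ Ioo u v) (hPs : P.2.2 - s ∉ Ioo u v) :
    BelowChord (fun z => volume {τ ∈ Icc a b | T τ ∈ Cube s x y z}) u v := by
  have hTz : ∀ τ ∈ Icc a b, (T τ).2.2 = P.2.2 := fun τ hτ => by
    rw [hT hτ]
    change P.2.2 + _ * (Q.2.2 - P.2.2) = P.2.2
    rw [hPQ, sub_self, mul_zero, add_zero]
  have hset : ∀ z, {τ ∈ Icc a b | T τ ∈ Cube s x y z} =
      {τ ∈ Icc a b | ((T τ).1 ∈ Icc x (x + s) ∧ (T τ).2.1 ∈ Icc y (y + s)) ∧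
        P.2.2 ∈ Icc z (z + s)} := fun z => by
    ext τ
    refine and_congr_right fun hτ => ?_
    rw [← hTz τ hτ]
    exact and_assoc.symm
  intro z hz
  by_cases hPz : P.2.2 ∈ Icc z (z + s)
  · have hPu : P.2.2 ∈ Icc u (u + s) :=
      ⟨by linarith [hPz.1, hz.1],
        le_of_not_gt fun h => hPs ⟨by linarith, by linarith [hPz.2, hz.2]⟩⟩
    have hPv : P.2.2 ∈ Icc v (v + s) :=
      ⟨le_of_not_gt fun h => hP ⟨by linarith [hPz.1, hz.1], h⟩, by linarith [hPz.2, hz.2]⟩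
    simp only [hset, hPz, hPu, hPv, and_true]
    rw [← add_mul, ofReal_chord_weights_add hz, one_mul]
  · simp only [hset, hPz, and_false, ofPred_false, measure_empty]
    exact zero_le

theorem belowChord_volume_edge_of_xy_eq (hab : a < b)
    (hT : EqOn T (fun τ => P + ((τ - a) / (b - a)) • (Q - P)) (Icc a b))
    (hx : P.1 = Q.1) (hy : P.2.1 = Q.2.1) (hPQ : P.2.2 ≠ Q.2.2)
    (hP : P.2.2 ∉ Ioo u v) (hPs : P.2.2 - s ∉ Ioo u v)
    (hQ : Q.2.2 ∉ Ioo u v) (hQs : Q.2.2 - s ∉ Ioo u v) :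
    BelowChord (fun z => volume {τ ∈ Icc a b | T τ ∈ Cube s x y z}) u v := by
  have hset : ∀ z, {τ ∈ Icc a b | T τ ∈ Cube s x y z} =
      {τ ∈ Icc a b | (P.1 ∈ Icc x (x + s) ∧ P.2.1 ∈ Icc y (y + s)) ∧
        P.2.2 + (τ - a) / (b - a) * (Q.2.2 - P.2.2) ∈ Icc z (z + s)} := fun z => by
    ext τ
    refine and_congr_right fun hτ => ?_
    rw [hT hτ]
    change (P.1 + _ * (Q.1 - P.1) ∈ _ ∧ P.2.1 + _ * (Q.2.1 - P.2.1) ∈ _ ∧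
      P.2.2 + (τ - a) / (b - a) * (Q.2.2 - P.2.2) ∈ _) ↔ _
    simp only [← hx, ← hy, sub_self, mul_zero, add_zero]
    exact and_assoc.symm
  by_cases hxy : P.1 ∈ Icc x (x + s) ∧ P.2.1 ∈ Icc y (y + s)
  · simp only [hset, hxy, true_and]
    simp_rw [volume_sep_Icc_affine_mem hab hPQ, volume_uIcc_inter_Icc]
    refine (belowChord_ofReal_min_sub_max ?_ ?_).const_mul _
    · rcases min_choice P.2.2 Q.2.2 with h | h <;> rw [h] <;> assumption
    · rcases max_choice P.2.2 Q.2.2 with h | h <;> rw [h] <;> assumption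
  · simp only [hset, hxy, false_and, sep_false, measure_empty]
    exact fun z _ => zero_le

theorem belowChord_volume_edge (hab : a < b)
    (hT : EqOn T (fun τ => P + ((τ - a) / (b - a)) • (Q - P)) (Icc a b))
    (haxis : (P.1 = Q.1 ∧ P.2.1 = Q.2.1) ∨ P.2.2 = Q.2.2)
    (hP : P.2.2 ∉ Ioo u v) (hPs : P.2.2 - s ∉ Ioo u v)
    (hQ : Q.2.2 ∉ Ioo u v) (hQs : Q.2.2 - s ∉ Ioo u v) :
    BelowChord (fun z => volume {τ ∈ Icc a b | T τ ∈ Cube s x y z}) u v := by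
  by_cases hPQ : P.2.2 = Q.2.2
  · exact belowChord_volume_edge_of_z_eq hT hPQ hP hPs
  · obtain ⟨hx, hy⟩ := haxis.resolve_right hPQ
    exact belowChord_volume_edge_of_xy_eq hab hT hx hy hPQ hP hPs hQ hQs

end Edge

theorem Fin.exists_mem_Icc_castSucc_succ {α : Type*} [LinearOrder α] {n : ℕ} (hn : 1 ≤ n)
    (t : Fin (n + 1) → α) {τ : α} (hτ : τ ∈ Icc (t 0) (t (Fin.last n))) :
    ∃ i : Fin n, τ ∈ Icc (t i.castSucc) (t i.succ) := by
  by_contra! h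
  have hle : ∀ k, t k ≤ τ := fun k =>
    Fin.induction hτ.1 (fun i hi => (not_le.1 fun hsucc => h i ⟨hi, hsucc⟩).le) k
  obtain ⟨m, rfl⟩ : ∃ m, n = m + 1 := ⟨n - 1, by omega⟩
  exact h (Fin.last m) ⟨hle _, by simpa only [Fin.succ_last] using hτ.2⟩

theorem measure_Icc_inter_eq_sum {α : Type*} [LinearOrder α] [MeasurableSpace α]
    (μ : Measure α) [NullSingletonClass μ] {n : ℕ} (hn : 1 ≤ n) {t : Fin (n + 1) → α}
    (ht : Monotone t) {A : Set α}
    (hA : ∀ i : Fin n, NullMeasurableSet (Icc (t i.castSucc) (t i.succ) ∩ A) μ) :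
    μ (Icc (t 0) (t (Fin.last n)) ∩ A) = ∑ i : Fin n, μ (Icc (t i.castSucc) (t i.succ) ∩ A) := by
  have hunion :
      Icc (t 0) (t (Fin.last n)) ∩ A = ⋃ i : Fin n, Icc (t i.castSucc) (t i.succ) ∩ A := by
    ext τ
    simp only [mem_inter_iff, mem_iUnion]
    constructor
    · rintro ⟨hτ, hτA⟩
      obtain ⟨i, hi⟩ := Fin.exists_mem_Icc_castSucc_succ hn t hτ
      exact ⟨i, hi, hτA⟩
    · rintro ⟨i, hi, hτA⟩
      exact ⟨Icc_subset_Icc (ht (Fin.zero_le _)) (ht (Fin.le_last _)) hi, hτA⟩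
  have hdisj : ∀ i j : Fin n, i < j →
      AEDisjoint μ (Icc (t i.castSucc) (t i.succ) ∩ A) (Icc (t j.castSucc) (t j.succ) ∩ A) :=
    fun i j hij => measure_mono_null (fun τ ⟨⟨hi, _⟩, ⟨hj, _⟩⟩ =>
      le_antisymm hi.2 ((ht (Fin.succ_le_castSucc_iff.2 hij)).trans hj.1)) (measure_singleton _)
  rw [hunion, measure_iUnion₀ _ hA, tsum_fintype]
  intro i j hij
  rcases lt_or_gt_of_ne hij with h | h
  exacts [hdisj i j h, (hdisj j i h).symm]

theorem measurableSet_sep_of_eqOn {α β : Type*} [MeasurableSpace α] [MeasurableSpace β]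
    {s : Set α} (hs : MeasurableSet s) {T g : α → β} (hTg : EqOn T g s) (hg : Measurable g)
    {C : Set β} (hC : MeasurableSet C) : MeasurableSet {τ ∈ s | T τ ∈ C} := by
  have hsep : {τ ∈ s | T τ ∈ C} = s ∩ g ⁻¹' C := by
    ext τ
    exact and_congr_right fun hτ => by rw [mem_preimage, hTg hτ]
  exact hsep ▸ hs.inter (hg hC)

theorem measurableSet_cube (s x y z : ℝ) : MeasurableSet (Cube s x y z) :=
  measurableSet_Icc.prod (measurableSet_Icc.prod measurableSet_Icc)

theorem snd_snd_mem_uIcc_of_eqOn {a b τ : ℝ} {P Q : ℝ × ℝ × ℝ} {T : ℝ → ℝ × ℝ × ℝ}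
    (hT : EqOn T (fun τ => P + ((τ - a) / (b - a)) • (Q - P)) (Icc a b)) (hτ : τ ∈ Icc a b) :
    (T τ).2.2 ∈ uIcc P.2.2 Q.2.2 := by
  rw [hT hτ]
  exact (convex_uIcc _ _).add_smul_sub_mem left_mem_uIcc right_mem_uIcc
    ⟨div_nonneg (sub_nonneg.2 hτ.1) (sub_nonneg.2 (hτ.1.trans hτ.2)),
      div_le_one_of_le₀ (sub_le_sub_right hτ.2 a) (sub_nonneg.2 (hτ.1.trans hτ.2))⟩

section Trajectory

variable {n : ℕ} {t : Fin (n + 1) → ℝ} {p : Fin (n + 1) → ℝ × ℝ × ℝ} {T : ℝ → ℝ × ℝ × ℝ}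
  {s x y : ℝ}

theorem wgt3_eq_sum (hn : 1 ≤ n) (ht : Monotone t)
    (hT : ∀ i : Fin n, ∀ τ ∈ Icc (t i.castSucc) (t i.succ),
      T τ = p i.castSucc +
        ((τ - t i.castSucc) / (t i.succ - t i.castSucc)) • (p i.succ - p i.castSucc))
    (z : ℝ) :
    wgt3 s (t 0) (t (Fin.last n)) T x y z =
      ∑ i : Fin n, volume {τ ∈ Icc (t i.castSucc) (t i.succ) | T τ ∈ Cube s x y z} :=
  measure_Icc_inter_eq_sum volume hn ht fun i =>
    (measurableSet_sep_of_eqOn measurableSet_Icc (hT i) (by fun_prop)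
      (measurableSet_cube s x y z)).nullMeasurableSet

theorem wgt3_eq_zero (hn : 1 ≤ n)
    (hT : ∀ i : Fin n, ∀ τ ∈ Icc (t i.castSucc) (t i.succ),
      T τ = p i.castSucc +
        ((τ - t i.castSucc) / (t i.succ - t i.castSucc)) • (p i.succ - p i.castSucc))
    {z : ℝ} (hz : (∀ j, z + s < (p j).2.2) ∨ ∀ j, (p j).2.2 < z) :
    wgt3 s (t 0) (t (Fin.last n)) T x y z = 0 := by
  refine measure_mono_null (fun τ ⟨hτ, hcube⟩ => ?_) measure_empty
  obtain ⟨i, hi⟩ := Fin.exists_mem_Icc_castSucc_succ hn t hτ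
  have hzT := hcube.2.2
  rcases hz with h | h <;> rcases mem_uIcc.1 (snd_snd_mem_uIcc_of_eqOn (hT i) hi) with hT' | hT'
  all_goals linarith [h i.castSucc, h i.succ, hzT.1, hzT.2, hT'.1, hT'.2]

theorem belowChord_wgt3 (hn : 1 ≤ n) (ht : StrictMono t)
    (hT : ∀ i : Fin n, ∀ τ ∈ Icc (t i.castSucc) (t i.succ),
      T τ = p i.castSucc +
        ((τ - t i.castSucc) / (t i.succ - t i.castSucc)) • (p i.succ - p i.castSucc))
    (haxis : ∀ i : Fin n,
      ((p i.castSucc).1 = (p i.succ).1 ∧ (p i.castSucc).2.1 = (p i.succ).2.1) ∨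
        (p i.castSucc).2.2 = (p i.succ).2.2)
    {u v : ℝ} (hp : ∀ j, (p j).2.2 ∉ Ioo u v) (hps : ∀ j, (p j).2.2 - s ∉ Ioo u v) :
    BelowChord (wgt3 s (t 0) (t (Fin.last n)) T x y) u v :=
  (BelowChord.sum Finset.univ fun i _ => belowChord_volume_edge (ht (Fin.castSucc_lt_succ (i := i)))
    (hT i) (haxis i) (hp _) (hps _) (hp _) (hps _)).congr
    fun z _ => (wgt3_eq_sum hn ht.monotone hT z).symm

end Trajectory

theorem Finset.forall_lt_or_forall_gt_or_exists_gap {α : Type*} [LinearOrder α] (B : Finset α)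
    {z : α} (hz : z ∉ B) :
    (∀ b ∈ B, z < b) ∨ (∀ b ∈ B, b < z) ∨
      ∃ u ∈ B, ∃ v ∈ B, z ∈ Set.Ioo u v ∧ ∀ b ∈ B, b ∉ Set.Ioo u v := by
  have hne : ∀ b ∈ B, b ≠ z := fun b hb h => hz (h ▸ hb)
  by_cases hL : (B.filter (· < z)).Nonempty
  · by_cases hU : (B.filter (z < ·)).Nonempty
    · obtain ⟨hu, huz⟩ := Finset.mem_filter.1 ((B.filter (· < z)).max'_mem hL)
      obtain ⟨hv, hzv⟩ := Finset.mem_filter.1 ((B.filter (z < ·)).min'_mem hU)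
      refine Or.inr (Or.inr ⟨_, hu, _, hv, ⟨huz, hzv⟩, fun b hb hbuv => ?_⟩)
      rcases lt_or_gt_of_ne (hne b hb) with hbz | hzb
      · exact (Finset.le_max' _ b (Finset.mem_filter.2 ⟨hb, hbz⟩)).not_gt hbuv.1
      · exact (Finset.min'_le _ b (Finset.mem_filter.2 ⟨hb, hzb⟩)).not_gt hbuv.2
    · rw [Finset.not_nonempty_iff_eq_empty, Finset.filter_eq_empty_iff] at hU
      exact Or.inr (Or.inl fun b hb => lt_of_le_of_ne (not_lt.1 (hU hb)) (hne b hb))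
  · rw [Finset.not_nonempty_iff_eq_empty, Finset.filter_eq_empty_iff] at hL
    exact Or.inl fun b hb => lt_of_le_of_ne (not_lt.1 (hL hb)) (hne b hb).symm

theorem cube_hotspot_eq_sup_face_through_vertex_general
    (n : ℕ) (hn : 1 ≤ n) (s : ℝ)
    (t : Fin (n + 1) → ℝ) (ht : StrictMono t)
    (p : Fin (n + 1) → ℝ × ℝ × ℝ)
    (T : ℝ → ℝ × ℝ × ℝ)
    (hT : ∀ i : Fin n, ∀ τ ∈ Icc (t i.castSucc) (t i.succ),
      T τ = p i.castSucc +
        ((τ - t i.castSucc) / (t i.succ - t i.castSucc)) • (p i.succ - p i.castSucc))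
    (haxis : ∀ i : Fin n,
      ((p i.castSucc).1 = (p i.succ).1 ∧ (p i.castSucc).2.1 = (p i.succ).2.1) ∨
      ((p i.castSucc).1 = (p i.succ).1 ∧ (p i.castSucc).2.2 = (p i.succ).2.2) ∨
      ((p i.castSucc).2.1 = (p i.succ).2.1 ∧ (p i.castSucc).2.2 = (p i.succ).2.2)) :
    (⨆ q : ℝ × ℝ × ℝ, wgt3 s (t 0) (t (Fin.last n)) T q.1 q.2.1 q.2.2) =
      ⨆ j : Fin (n + 1), ⨆ q : ℝ × ℝ,
        ⨆ b ∈ ({(p j).2.2 - s, (p j).2.2} : Set ℝ),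
          wgt3 s (t 0) (t (Fin.last n)) T q.1 q.2 b := by
  set B : Finset ℝ :=
    Finset.univ.image (fun j => (p j).2.2) ∪ Finset.univ.image (fun j => (p j).2.2 - s)
  have hp : ∀ j, (p j).2.2 ∈ B := fun j => by simp [B]
  have hps : ∀ j, (p j).2.2 - s ∈ B := fun j => by simp [B]
  have hB : ∀ w ∈ B, ∀ x y, wgt3 s (t 0) (t (Fin.last n)) T x y w ≤
      ⨆ j : Fin (n + 1), ⨆ q : ℝ × ℝ, ⨆ b ∈ ({(p j).2.2 - s, (p j).2.2} : Set ℝ),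
        wgt3 s (t 0) (t (Fin.last n)) T q.1 q.2 b := by
    intro w hw x y
    obtain ⟨j, hj⟩ : ∃ j, w ∈ ({(p j).2.2 - s, (p j).2.2} : Set ℝ) := by
      simp only [B, Finset.mem_union, Finset.mem_image, Finset.mem_univ, true_and] at hw
      rcases hw with ⟨j, rfl⟩ | ⟨j, rfl⟩ <;> exact ⟨j, by simp⟩
    exact le_iSup_of_le j (le_iSup_of_le (x, y) (le_iSup₂_of_le w hj le_rfl))
  refine le_antisymm (iSup_le fun ⟨x, y, z⟩ => ?_)
    (iSup_le fun j => iSup_le fun q => iSup₂_le fun b _ => le_iSup_of_le (q.1, q.2, b) le_rfl)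
  by_cases hzB : z ∈ B
  · exact hB z hzB x y
  rcases B.forall_lt_or_forall_gt_or_exists_gap hzB with hlt | hgt | ⟨u, hu, v, hv, hz, hgap⟩
  · exact (wgt3_eq_zero hn hT (Or.inl fun j => by linarith [hlt _ (hps j)])).le.trans zero_le
  · exact (wgt3_eq_zero hn hT (Or.inr fun j => hgt _ (hp j))).le.trans zero_le
  · have haxis' : ∀ i : Fin n, ((p i.castSucc).1 = (p i.succ).1 ∧
        (p i.castSucc).2.1 = (p i.succ).2.1) ∨ (p i.castSucc).2.2 = (p i.succ).2.2 :=
      fun i => (haxis i).imp_right fun h => h.elim (·.2) (·.2)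
    exact ((belowChord_wgt3 hn ht hT haxis' (fun j => hgap _ (hp j))
      (fun j => hgap _ (hps j))).le_max hz).trans (max_le (hB u hu x y) (hB v hv x y))

theorem cube_hotspot_eq_sup_face_through_vertex
    (n : ℕ) (hn : 1 ≤ n) (s : ℝ) (hs : 0 < s)
    (t : Fin (n + 1) → ℝ) (ht : StrictMono t)
    (p : Fin (n + 1) → ℝ × ℝ × ℝ)
    (T : ℝ → ℝ × ℝ × ℝ)
    (hT : ∀ i : Fin n, ∀ τ ∈ Icc (t i.castSucc) (t i.succ),
      T τ = p i.castSucc +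
        ((τ - t i.castSucc) / (t i.succ - t i.castSucc)) • (p i.succ - p i.castSucc))
    (haxis : ∀ i : Fin n,
      ((p i.castSucc).1 = (p i.succ).1 ∧ (p i.castSucc).2.1 = (p i.succ).2.1) ∨
      ((p i.castSucc).1 = (p i.succ).1 ∧ (p i.castSucc).2.2 = (p i.succ).2.2) ∨
      ((p i.castSucc).2.1 = (p i.succ).2.1 ∧ (p i.castSucc).2.2 = (p i.succ).2.2))
    (hzpos : ∀ i : Fin n,
      (p i.castSucc).1 = (p i.succ).1 → (p i.castSucc).2.1 = (p i.succ).2.1 →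
        (p i.castSucc).2.2 ≠ (p i.succ).2.2) :
    (⨆ q : ℝ × ℝ × ℝ, wgt3 s (t 0) (t (Fin.last n)) T q.1 q.2.1 q.2.2) =
      ⨆ j : Fin (n + 1), ⨆ q : ℝ × ℝ,
        ⨆ b ∈ ({(p j).2.2 - s, (p j).2.2} : Set ℝ),
          wgt3 s (t 0) (t (Fin.last n)) T q.1 q.2 b :=
  cube_hotspot_eq_sup_face_through_vertex_general n hn s t ht p T hT haxis
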